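/- arXiv:1504.02242 — 2 statements merged into one kernel-verified Lean document; each statement's English description precedes it below -/
import Mathlib

section
/- Let γ̄ > 0 and M ≥ 1. Then M·∫_0^∞ log₂(1+x)·f(x)·F(x)^{2M-1} dx = M·∑_{k=0}^{2M−1} C(2M−1,k)·((−1)^k/((1+k)·ln 2))·exp((1+k)/γ̄)·E₁((1+k)/γ̄), where f(x) = e^{−x/γ̄}/γ̄ and F(x) = 1 − e^{−x/γ̄}. -/
open MeasureTheory Set Filter Real Asymptotics

lemma tendsto_log_mul_exp {b : ℝ} (hb : 0 < b) :
    Tendsto (fun x : ℝ => Real.log (1 + x) * Real.exp (-b * x)) atTop (nhds 0) := by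
  refine squeeze_zero_norm' ?_ (tendsto_rpow_mul_exp_neg_mul_atTop_nhds_zero 1 b hb)
  filter_upwards [eventually_ge_atTop (0:ℝ)] with x hx
  rw [Real.rpow_one, Real.norm_eq_abs, abs_mul, abs_of_nonneg (Real.exp_pos _).le,
    abs_of_nonneg (Real.log_nonneg (by linarith))]
  have h1 : Real.log (1 + x) ≤ x := by
    have := Real.log_le_sub_one_of_pos (x := 1 + x) (by linarith)
    linarith
  exact mul_le_mul_of_nonneg_right h1 (Real.exp_pos _).le

lemma contOn_log_mul_exp (b : ℝ) :
    ContinuousOn (fun x : ℝ => Real.log (1 + x) * Real.exp (-b * x)) (Ici 0) := by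
  intro x hx
  have hne : (1:ℝ) + x ≠ 0 := by simp only [mem_Ici] at hx; linarith
  have h1 : ContinuousAt (fun x : ℝ => Real.log (1 + x)) x :=
    (Real.continuousAt_log hne).comp (by fun_prop)
  exact (h1.mul (by fun_prop)).continuousWithinAt

lemma integrableOn_log_mul_exp {b : ℝ} (hb : 0 < b) :
    IntegrableOn (fun x : ℝ => Real.log (1 + x) * Real.exp (-b * x)) (Ioi 0) := by
  apply integrable_of_isBigO_exp_neg (half_pos hb) (contOn_log_mul_exp b)
  have h : Tendsto (fun x : ℝ => Real.log (1 + x) * Real.exp (-b * x) / Real.exp (-(b/2) * x))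
      atTop (nhds 0) := by
    have := tendsto_log_mul_exp (half_pos hb)
    refine this.congr' ?_
    filter_upwards with x
    rw [mul_div_assoc, ← Real.exp_sub]
    ring_nf
  exact ((isLittleO_iff_tendsto fun x hx => absurd hx (Real.exp_ne_zero _)).mpr h).isBigO

lemma integrableOn_exp_div {b : ℝ} (hb : 0 < b) :
    IntegrableOn (fun x : ℝ => Real.exp (-b * x) / (1 + x)) (Ioi 0) := by
  apply Integrable.mono' (exp_neg_integrableOn_Ioi 0 hb)
  · apply (ContinuousOn.aestronglyMeasurable ?_ measurableSet_Ioi)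
    intro x hx
    have hne : (1:ℝ) + x ≠ 0 := by simp only [mem_Ioi] at hx; linarith
    exact ((by fun_prop : ContinuousAt (fun x : ℝ => Real.exp (-b*x)) x).div (by fun_prop) hne).continuousWithinAt
  · filter_upwards [ae_restrict_mem measurableSet_Ioi] with x hx
    simp only [mem_Ioi] at hx
    rw [Real.norm_eq_abs, abs_div, abs_of_nonneg (Real.exp_pos _).le, abs_of_nonneg (by linarith)]
    rw [div_le_iff₀ (by linarith)]
    nlinarith [Real.exp_pos (-b * x)]

noncomputable def E1 (y : ℝ) : ℝ := ∫ t in Set.Ioi (1 : ℝ), Real.exp (-y * t) / t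

lemma integral_shift_one (g : ℝ → ℝ) :
    ∫ x in Ioi (0:ℝ), g (x + 1) = ∫ t in Ioi (1:ℝ), g t := by
  rw [← integral_indicator measurableSet_Ioi, ← integral_indicator measurableSet_Ioi,
    ← integral_add_right_eq_self (Set.indicator (Ioi 1) g) 1]
  congr 1; ext x
  simp only [Set.indicator_apply, mem_Ioi]
  by_cases h : 0 < x
  · rw [if_pos h, if_pos (by linarith)]
  · rw [if_neg h, if_neg (by intro hc; exact h (by linarith))]

lemma integral_exp_div_eq {b : ℝ} (hb : 0 < b) :
    ∫ x in Ioi (0:ℝ), Real.exp (-b * x) / (1 + x) = Real.exp b * E1 b := by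
  rw [E1, ← integral_shift_one (fun t => Real.exp (-b * t) / t), ← integral_const_mul]
  apply setIntegral_congr_fun measurableSet_Ioi
  intro x hx
  simp only [mem_Ioi] at hx
  simp only
  rw [← mul_div_assoc, ← Real.exp_add]
  rw [show b + -b * (x+1) = -b * x by ring, add_comm 1 x]

lemma integral_parts {b : ℝ} (hb : 0 < b) :
    ∫ x in Ioi (0:ℝ), Real.log (1+x) * Real.exp (-b*x)
      = (∫ x in Ioi (0:ℝ), Real.exp (-b*x)/(1+x)) / b := by
  have hd : ∀ x ∈ Ici (0:ℝ), HasDerivAt (fun x => Real.log (1+x) * Real.exp (-b*x))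
      (Real.exp (-b*x)/(1+x) - b * (Real.log (1+x) * Real.exp (-b*x))) x := by
    intro x hx
    simp only [mem_Ici] at hx
    have hne : (1:ℝ)+x ≠ 0 := by linarith
    have h1 : HasDerivAt (fun x : ℝ => Real.log (1+x)) (1/(1+x)) x := by
      have := (((hasDerivAt_id x).const_add 1).log hne)
      simpa using this
    have h2 : HasDerivAt (fun x : ℝ => Real.exp (-b*x)) (Real.exp (-b*x) * (-b)) x := by
      have := (((hasDerivAt_id x).const_mul (-b)).exp)
      simpa [mul_comm] using this
    have := h1.mul h2
    refine this.congr_deriv ?_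
    ring
  have hi1 := integrableOn_exp_div hb
  have hi2 := (integrableOn_log_mul_exp hb).const_mul b
  have h0 := integral_Ioi_of_hasDerivAt_of_tendsto' hd (hi1.sub hi2) (tendsto_log_mul_exp hb)
  rw [integral_sub hi1 hi2, integral_const_mul] at h0
  simp only [add_zero, Real.log_one, mul_zero, neg_zero, zero_mul, sub_zero, zero_sub] at h0
  have : (∫ x in Ioi (0:ℝ), Real.exp (-b*x)/(1+x))
      = b * ∫ x in Ioi (0:ℝ), Real.log (1+x) * Real.exp (-b*x) := by linarith
  rw [this]
  rw [mul_div_cancel_left₀ _ hb.ne']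

lemma key_integral {b : ℝ} (hb : 0 < b) :
    ∫ x in Ioi (0:ℝ), Real.log (1+x) * Real.exp (-b*x) = Real.exp b * E1 b / b := by
  rw [integral_parts hb, integral_exp_div_eq hb]

theorem stmt8 (γ : ℝ) (hγ : 0 < γ) (M : ℕ) (hM : 1 ≤ M) :
    (M : ℝ) * ∫ x in Set.Ioi (0 : ℝ),
        Real.logb 2 (1 + x) * (Real.exp (-x / γ) / γ) * (1 - Real.exp (-x / γ)) ^ (2 * M - 1)
      = (M : ℝ) * ∑ k ∈ Finset.range (2 * M),
          (Nat.choose (2 * M - 1) k : ℝ) * ((-1 : ℝ) ^ k / ((1 + (k : ℝ)) * Real.log 2))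
            * Real.exp ((1 + (k : ℝ)) / γ) * E1 ((1 + (k : ℝ)) / γ) := by
  have hγ' : γ ≠ 0 := hγ.ne'
  have hlog2 : Real.log 2 ≠ 0 := (Real.log_pos (by norm_num)).ne'
  set n := 2 * M - 1 with hn
  have hn1 : n + 1 = 2 * M := by omega
  have hb : ∀ k : ℕ, (0:ℝ) < (1 + k) / γ := fun k => by positivity
  set c : ℕ → ℝ := fun k => (Nat.choose n k : ℝ) * (-1)^k / (γ * Real.log 2) with hc
  have key : ∀ x ∈ Ioi (0:ℝ),
      Real.logb 2 (1+x) * (Real.exp (-x/γ)/γ) * (1 - Real.exp (-x/γ))^n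
      = ∑ k ∈ Finset.range (2*M),
          c k * (Real.log (1+x) * Real.exp (-((1 + (k:ℝ))/γ) * x)) := by
    intro x hx
    rw [show (1 : ℝ) - Real.exp (-x/γ) = (-Real.exp (-x/γ)) + 1 by ring, add_pow, hn1,
      Finset.mul_sum]
    refine Finset.sum_congr rfl fun k hk => ?_
    rw [one_pow, mul_one, neg_pow, ← Real.exp_nat_mul, Real.logb, hc]
    have hexp : Real.exp (-((1 + (k:ℝ))/γ) * x) = Real.exp (-x/γ) * Real.exp (k * (-x/γ)) := by
      rw [← Real.exp_add]; congr 1; field_simp; ring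
    simp only [hexp]
    field_simp
  rw [setIntegral_congr_fun measurableSet_Ioi key]
  rw [integral_finset_sum _ (fun k _ =>
    ((integrableOn_log_mul_exp (hb k)).const_mul (c k)))]
  congr 1
  refine Finset.sum_congr rfl fun k hk => ?_
  rw [integral_const_mul, key_integral (hb k), hc]
  have h1k : (1:ℝ) + k ≠ 0 := by positivity
  field_simp
end

section
/- Let H_n denote the n-th harmonic number. For any γ̄ > 0 and integer M ≥ 1, define L(γ̄) = M·∑_{k=0}^{2M−1} C(2M−1,k)·((−1)^k/((1+k)·ln 2))·exp((1+k)/γ̄)·E₁((1+k)/γ̄). Then lim_{γ̄→0⁺} L(γ̄)/γ̄ = H_{2M}/(2·ln 2). -/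
/-!
For `y > 0`, bounding `1 / t` on `t > 1` above by `1` and below by `exp (1 - t)` gives
`1 / (y + 1) ≤ exp y * E₁ y ≤ 1 / y`. With `y = c / γ`, both bounds divided by `γ` tend to
`1 / c`, so the `k`-th summand of `L(γ) / γ` tends to `C(n - 1, k) (-1)^k / ((1 + k)² ln 2)`,
where `n = 2M`. The limit is then `H_n / (2 ln 2)` by the identity
`∑_{k<n} C(n, k + 1) (-1)^k / (k + 1) = H_n`, which follows by induction on `n` from Pascal's
rule and `∑_{k≤n} C(n, k) (-1)^k / (k + 1) = 1 / (n + 1)`.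
-/

noncomputable def H (n : ℕ) : ℝ := ∑ k ∈ Finset.Icc 1 n, (1 : ℝ) / k

open Finset

section Combinatorics

variable {K : Type*} [Field K] [CharZero K]

lemma choose_div_add_one_eq_choose_succ_div (n k : ℕ) :
    (n.choose k : K) / (k + 1) = ((n + 1).choose (k + 1) : K) / (n + 1) := by
  have h : ((n + 1 : ℕ) : K) * n.choose k = ((n + 1).choose (k + 1) : K) * (k + 1 : ℕ) := by
    exact_mod_cast Nat.add_one_mul_choose_eq n k
  push_cast at h
  field_simp
  linear_combination h

lemma sum_range_neg_one_pow_mul_choose_succ (n : ℕ) :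
    ∑ k ∈ range n, (-1 : K) ^ k * (n.choose (k + 1) : K) = if n = 0 then 0 else 1 := by
  have h : ∑ j ∈ range (n + 1), (-1 : K) ^ j * (n.choose j : K) = if n = 0 then 1 else 0 := by
    exact_mod_cast Int.alternating_sum_range_choose (n := n)
  rw [sum_range_succ'] at h
  simp only [pow_succ, mul_neg_one, neg_mul, sum_neg_distrib, pow_zero, one_mul,
    Nat.choose_zero_right, Nat.cast_one] at h
  split_ifs at h ⊢ <;> linear_combination -h

lemma sum_range_succ_choose_mul_neg_one_pow_div_succ (n : ℕ) :
    ∑ k ∈ range (n + 1), (n.choose k : K) * (-1) ^ k / (k + 1) = 1 / (n + 1) := by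
  simp_rw [mul_div_right_comm, choose_div_add_one_eq_choose_succ_div, div_mul_eq_mul_div,
    ← sum_div, mul_comm _ ((-1 : K) ^ _)]
  rw [sum_range_neg_one_pow_mul_choose_succ]
  push_cast
  simp

end Combinatorics

lemma H_succ (n : ℕ) : H (n + 1) = H n + 1 / (n + 1) := by
  rw [H, H, sum_Icc_succ_top (Nat.le_add_left 1 n)]
  push_cast
  rfl

lemma sum_range_choose_succ_mul_neg_one_pow_div_succ_eq_H (n : ℕ) :
    ∑ k ∈ range n, (n.choose (k + 1) : ℝ) * (-1) ^ k / (k + 1) = H n := by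
  induction n with
  | zero => simp [H]
  | succ n ih =>
    have pascal : ∀ k ∈ range (n + 1),
        ((n + 1).choose (k + 1) : ℝ) * (-1) ^ k / (k + 1)
          = (n.choose (k + 1) : ℝ) * (-1) ^ k / (k + 1)
            + (n.choose k : ℝ) * (-1) ^ k / (k + 1) := by
      intro k _
      rw [Nat.choose_succ_succ', Nat.cast_add]
      ring
    rw [sum_congr rfl pascal, sum_add_distrib, sum_range_succ_choose_mul_neg_one_pow_div_succ,
      sum_range_succ, Nat.choose_succ_self, ih, H_succ]
    simp

lemma mul_sum_range_choose_pred_mul_neg_one_pow_div_sq_eq_H (n : ℕ) :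
    n * ∑ k ∈ range n, ((n - 1).choose k : ℝ) * (-1) ^ k / (1 + k) ^ 2 = H n := by
  rcases n with _ | n
  · simp [H]
  rw [← sum_range_choose_succ_mul_neg_one_pow_div_succ_eq_H, mul_sum, Nat.add_sub_cancel]
  refine sum_congr rfl fun k _ => ?_
  have h := choose_div_add_one_eq_choose_succ_div (K := ℝ) n k
  field_simp at h ⊢
  push_cast
  linear_combination ((k : ℝ) + 1) * h

open MeasureTheory Real Set Filter Topology

section ExponentialIntegral

lemma integrableOn_exp_neg_mul_div_Ioi_one {y : ℝ} (hy : 0 < y) :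
    IntegrableOn (fun t => exp (-y * t) / t) (Ioi 1) := by
  refine (integrableOn_exp_mul_Ioi (neg_neg_of_pos hy) 1).mono' ?_ ?_
  · exact (continuousOn_of_forall_continuousAt fun t (ht : 1 < t) => by
      fun_prop (disch := positivity)).aestronglyMeasurable measurableSet_Ioi
  · filter_upwards [ae_restrict_mem measurableSet_Ioi] with t (ht : 1 < t)
    rw [norm_of_nonneg (by positivity)]
    exact div_le_self (exp_pos _).le ht.le

lemma E1_le_exp_neg_div {y : ℝ} (hy : 0 < y) : E1 y ≤ exp (-y) / y := by
  have h := integral_exp_mul_Ioi (neg_neg_of_pos hy) 1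
  rw [mul_one, neg_div_neg_eq] at h
  rw [E1, ← h]
  refine setIntegral_mono_on (integrableOn_exp_neg_mul_div_Ioi_one hy)
    (integrableOn_exp_mul_Ioi (neg_neg_of_pos hy) 1) measurableSet_Ioi fun t (ht : 1 < t) => ?_
  exact div_le_self (exp_pos _).le ht.le

lemma exp_neg_div_add_one_le_E1 {y : ℝ} (hy : 0 < y) : exp (-y) / (y + 1) ≤ E1 y := by
  have hy' : -(y + 1) < 0 := by linarith
  have h := integral_exp_mul_Ioi hy' 1
  have h' : ∫ t in Ioi (1 : ℝ), exp 1 * exp (-(y + 1) * t) = exp (-y) / (y + 1) := by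
    rw [integral_const_mul, h, mul_one, neg_div_neg_eq, mul_div_assoc', ← exp_add]
    ring_nf
  rw [E1, ← h']
  refine setIntegral_mono_on ((integrableOn_exp_mul_Ioi hy' 1).const_mul _)
    (integrableOn_exp_neg_mul_div_Ioi_one hy) measurableSet_Ioi fun t (ht : 1 < t) => ?_
  have ht0 : 0 < t := by linarith
  rw [le_div_iff₀ ht0]
  calc exp 1 * exp (-(y + 1) * t) * t ≤ exp 1 * exp (-(y + 1) * t) * exp (t - 1) := by
        gcongr
        linarith [add_one_le_exp (t - 1)]
    _ = exp (-y * t) := by rw [← exp_add, ← exp_add]; ring_nf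

lemma tendsto_exp_mul_E1_div {c : ℝ} (hc : 0 < c) :
    Tendsto (fun γ => exp (c / γ) * E1 (c / γ) / γ) (𝓝[>] 0) (𝓝 c⁻¹) := by
  have lower : Tendsto (fun γ : ℝ => (c + γ)⁻¹) (𝓝[>] 0) (𝓝 c⁻¹) := by
    simpa using ((continuous_const.add continuous_id).tendsto' 0 c (add_zero c)).inv₀
      hc.ne' |>.mono_left nhdsWithin_le_nhds
  refine tendsto_of_tendsto_of_tendsto_of_le_of_le' lower tendsto_const_nhds ?_ ?_ <;>
    filter_upwards [self_mem_nhdsWithin] with γ (hγ : 0 < γ)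
  · have h := exp_neg_div_add_one_le_E1 (div_pos hc hγ)
    calc (c + γ)⁻¹ = exp (c / γ) * (exp (-(c / γ)) / (c / γ + 1)) / γ := by
          rw [mul_div_assoc', ← exp_add, add_neg_cancel, exp_zero]
          field_simp
      _ ≤ exp (c / γ) * E1 (c / γ) / γ := by gcongr
  · have h := E1_le_exp_neg_div (div_pos hc hγ)
    calc exp (c / γ) * E1 (c / γ) / γ
        ≤ exp (c / γ) * (exp (-(c / γ)) / (c / γ)) / γ := by gcongr
      _ = c⁻¹ := by
          rw [mul_div_assoc', ← exp_add, add_neg_cancel, exp_zero]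
          field_simp

end ExponentialIntegral

theorem stmt9_general (M : ℕ) :
    Filter.Tendsto
      (fun γ : ℝ =>
        ((M : ℝ) * ∑ k ∈ Finset.range (2 * M),
            (Nat.choose (2 * M - 1) k : ℝ) * ((-1 : ℝ) ^ k / ((1 + (k : ℝ)) * Real.log 2))
              * Real.exp ((1 + (k : ℝ)) / γ) * E1 ((1 + (k : ℝ)) / γ)) / γ)
      (nhdsWithin 0 (Set.Ioi 0)) (nhds (H (2 * M) / (2 * Real.log 2))) := by
  have hterm : ∀ k ∈ range (2 * M), Tendsto
      (fun γ => ((2 * M - 1).choose k : ℝ) * ((-1) ^ k / ((1 + (k : ℝ)) * log 2))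
        * (exp ((1 + k) / γ) * E1 ((1 + k) / γ) / γ))
      (𝓝[>] 0)
      (𝓝 (((2 * M - 1).choose k : ℝ) * ((-1) ^ k / ((1 + k) * log 2)) * (1 + (k : ℝ))⁻¹)) :=
    fun k _ => (tendsto_exp_mul_E1_div (by positivity)).const_mul _
  convert (tendsto_finsetSum _ hterm).const_mul (M : ℝ) using 2
  · rw [mul_div_assoc, sum_div]
    exact congrArg _ (sum_congr rfl fun k _ => by ring)
  · have hsum : ∑ k ∈ range (2 * M),
        ((2 * M - 1).choose k : ℝ) * ((-1) ^ k / ((1 + k) * log 2)) * (1 + (k : ℝ))⁻¹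
          = (∑ k ∈ range (2 * M), ((2 * M - 1).choose k : ℝ) * (-1) ^ k / (1 + k) ^ 2)
            / log 2 := by
      rw [sum_div]
      exact sum_congr rfl fun k _ => by simp only [div_eq_mul_inv, mul_inv, sq]; ring
    rw [hsum, ← mul_sum_range_choose_pred_mul_neg_one_pow_div_sq_eq_H]
    push_cast
    ring

theorem stmt9 (M : ℕ) (hM : 1 ≤ M) :
    Filter.Tendsto
      (fun γ : ℝ =>
        ((M : ℝ) * ∑ k ∈ Finset.range (2 * M),
            (Nat.choose (2 * M - 1) k : ℝ) * ((-1 : ℝ) ^ k / ((1 + (k : ℝ)) * Real.log 2))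
              * Real.exp ((1 + (k : ℝ)) / γ) * E1 ((1 + (k : ℝ)) / γ)) / γ)
      (nhdsWithin 0 (Set.Ioi 0)) (nhds (H (2 * M) / (2 * Real.log 2))) :=
  stmt9_general M
end
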